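/- For every a with 1 < a < 2 and every h with 0 < h < 3/2, the quantity J(h, a) = 5√2·(1-3a)·√h - π(a+1)h + (a+1)·h·arctan(√(2h)/(a+1)) + (15a² - 20a + 5 + (11-a)h)·arctan(√(2h)/(a-1)) is strictly negative. -/

import Mathlib

/-!
Put `s = √(2h)` and `b = a - 1`. The term with `arctan (s / (a + 1))` is at most `s³ / 2` by
`arctan x ≤ x`. For `arctan (s / b)` use the alternating Taylor bound
`arctan x ≤ x - x³/3 + x⁵/5` when `s ≤ b`, and `arctan x = π/2 - arctan x⁻¹` together with
`x - x³/3 ≤ arctan x` when `s > b`. After clearing denominators, each case becomes a polynomial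
inequality in `b`, `s` and `π`, which holds using only `3.14 < π < 3.1416` and `s² < 3`.
-/

open Real Set

lemma le_of_hasDerivAt_le_of_nonneg {f g f' g' : ℝ → ℝ} (hf : ∀ x, HasDerivAt f (f' x) x)
    (hg : ∀ x, HasDerivAt g (g' x) x) (h₀ : f 0 ≤ g 0) (h' : ∀ x, 0 < x → f' x ≤ g' x)
    {x : ℝ} (hx : 0 ≤ x) : f x ≤ g x := by
  have hmono : MonotoneOn (g - f) (Ici 0) := by
    refine monotoneOn_of_hasDerivWithinAt_nonneg (f' := g' - f') (convex_Ici 0)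
      (fun y _ => ((hg y).sub (hf y)).continuousAt.continuousWithinAt)
      (fun y _ => ((hg y).sub (hf y)).hasDerivWithinAt) fun y hy => ?_
    rw [interior_Ici] at hy
    exact sub_nonneg.2 (h' y hy)
  have := hmono self_mem_Ici hx hx
  simp only [Pi.sub_apply] at this
  linarith

lemma arctan_le_self {x : ℝ} (hx : 0 ≤ x) : arctan x ≤ x :=
  le_of_hasDerivAt_le_of_nonneg hasDerivAt_arctan hasDerivAt_id (by simp)
    (fun y _ => by rw [div_le_one (by positivity)]; nlinarith) hx

lemma sub_pow_three_div_three_le_arctan {x : ℝ} (hx : 0 ≤ x) : x - x ^ 3 / 3 ≤ arctan x := by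
  refine le_of_hasDerivAt_le_of_nonneg (f := fun y => y - y ^ 3 / 3) (f' := fun y => 1 - y ^ 2)
    (fun y => ?_) hasDerivAt_arctan (by simp) (fun y _ => ?_) hx
  · exact ((hasDerivAt_id' y).sub ((hasDerivAt_pow 3 y).div_const 3)).congr_deriv (by norm_num)
  · rw [le_div_iff₀ (by positivity)]
    nlinarith [pow_two_nonneg (y ^ 2)]

lemma arctan_le_sub_add_pow_five_div_five {x : ℝ} (hx : 0 ≤ x) :
    arctan x ≤ x - x ^ 3 / 3 + x ^ 5 / 5 := by
  refine le_of_hasDerivAt_le_of_nonneg (g := fun y => y - y ^ 3 / 3 + y ^ 5 / 5)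
    (g' := fun y => 1 - y ^ 2 + y ^ 4) hasDerivAt_arctan (fun y => ?_) (by simp)
    (fun y hy => ?_) hx
  · exact (((hasDerivAt_id' y).sub ((hasDerivAt_pow 3 y).div_const 3)).add
      ((hasDerivAt_pow 5 y).div_const 5)).congr_deriv (by norm_num)
  · rw [div_le_iff₀ (by positivity)]
    nlinarith [pow_pos hy 6]

lemma arctan_le_pi_div_two_sub {x : ℝ} (hx : 0 < x) :
    arctan x ≤ π / 2 - (x⁻¹ - x⁻¹ ^ 3 / 3) := by
  have := sub_pow_three_div_three_le_arctan (inv_pos.2 hx).le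
  rw [arctan_inv_of_pos hx] at this
  linarith

lemma melnikov_poly_neg_of_le {b s p : ℝ} (hb : 0 < b) (hs : 0 < s) (hsb : s ≤ b)
    (hp : 3.14 < p) :
    -15 * p * b ^ 6 - 30 * p * b ^ 5 - 100 * b ^ 3 * s + 40 * b ^ 2 * s ^ 3 + 60 * b * s ^ 3
      + 5 * b ^ 3 * s ^ 3 + 30 * s ^ 5 - 3 * b * s ^ 5 < 0 := by
  have h₂ : s ^ 2 ≤ b ^ 2 := pow_le_pow_left₀ hs.le hsb 2
  have h₃ : s ^ 3 ≤ b ^ 3 := pow_le_pow_left₀ hs.le hsb 3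
  have h₅ : s ^ 5 ≤ b ^ 5 := pow_le_pow_left₀ hs.le hsb 5
  nlinarith [mul_le_mul_of_nonneg_left h₂ (by positivity : 0 ≤ b * s),
    mul_le_mul_of_nonneg_left h₃ (by positivity : 0 ≤ b ^ 2),
    mul_le_mul_of_nonneg_left h₃ (by positivity : 0 ≤ b ^ 3),
    mul_lt_mul_of_pos_right hp (by positivity : 0 < b ^ 5),
    mul_lt_mul_of_pos_right hp (by positivity : 0 < b ^ 6),
    (by positivity : 0 ≤ b * s ^ 5)]

lemma melnikov_poly_neg_of_lt {b s p : ℝ} (hb : 0 < b) (hbs : b < s) (hs₃ : s ^ 2 < 3)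
    (hp : p < 3.1416) :
    3 * s ^ 4 + 9 * p * s ^ 3 - 9 / 2 * p * b * s ^ 3 - 120 * b * s ^ 2 - 60 * s ^ 2
      + 3 * b ^ 2 * s ^ 2 + 45 * p * b ^ 2 * s + 30 * p * b * s - 50 * b ^ 3 - 40 * b ^ 2
      - b ^ 4 < 0 := by
  have hs : 0 < s := hb.trans hbs
  have hs_lt : s < 1.7321 := by nlinarith
  have hcoef : 0 < 9 * s ^ 3 - 9 / 2 * b * s ^ 3 + 45 * b ^ 2 * s + 30 * b * s := by
    nlinarith [mul_pos hb hs, pow_pos hs 3]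
  nlinarith [pow_pos (sub_pos.2 hbs) 2, mul_pos hb hs, mul_lt_mul_of_pos_right hp hcoef]

/-- `J(h, a)` in the variable `s = √(2h)`. -/
noncomputable def melnikovJ (a s : ℝ) : ℝ :=
  5 * (1 - 3 * a) * s - π * (a + 1) * (s ^ 2 / 2) + (a + 1) * (s ^ 2 / 2) * arctan (s / (a + 1))
    + (15 * a ^ 2 - 20 * a + 5 + (11 - a) * (s ^ 2 / 2)) * arctan (s / (a - 1))

lemma melnikovJ_sqrt_two_mul {a h : ℝ} (hh : 0 ≤ h) :
    5 * √2 * (1 - 3 * a) * √h - π * (a + 1) * h + (a + 1) * h * arctan (√(2 * h) / (a + 1))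
      + (15 * a ^ 2 - 20 * a + 5 + (11 - a) * h) * arctan (√(2 * h) / (a - 1))
      = melnikovJ a √(2 * h) := by
  rw [melnikovJ, sq_sqrt (by positivity), sqrt_mul zero_le_two]
  ring

lemma melnikovJ_le {a s t : ℝ} (ha₁ : 1 < a) (ha₂ : a ≤ 11) (hs : 0 ≤ s)
    (ht : arctan (s / (a - 1)) ≤ t) :
    melnikovJ a s ≤ 5 * (1 - 3 * a) * s - π * (a + 1) * (s ^ 2 / 2) + s ^ 3 / 2
      + (15 * a ^ 2 - 20 * a + 5 + (11 - a) * (s ^ 2 / 2)) * t := by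
  have hC : 0 ≤ 15 * a ^ 2 - 20 * a + 5 + (11 - a) * (s ^ 2 / 2) := by
    nlinarith [mul_pos (sub_pos.2 ha₁) (by linarith : 0 < 3 * a - 1),
      mul_nonneg (sub_nonneg.2 ha₂) (sq_nonneg s)]
  have hB : (a + 1) * (s ^ 2 / 2) * arctan (s / (a + 1)) ≤ s ^ 3 / 2 :=
    calc (a + 1) * (s ^ 2 / 2) * arctan (s / (a + 1))
        ≤ (a + 1) * (s ^ 2 / 2) * (s / (a + 1)) := by
          gcongr; exact arctan_le_self (by positivity)
      _ = s ^ 3 / 2 := by field_simp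
  rw [melnikovJ]
  gcongr

lemma melnikovJ_neg_of_le_sub_one {a s : ℝ} (ha₁ : 1 < a) (ha₂ : a ≤ 11) (hs₀ : 0 < s)
    (hs : s ≤ a - 1) : melnikovJ a s < 0 := by
  have hb : 0 < a - 1 := by linarith
  calc melnikovJ a s
      ≤ 5 * (1 - 3 * a) * s - π * (a + 1) * (s ^ 2 / 2) + s ^ 3 / 2
        + (15 * a ^ 2 - 20 * a + 5 + (11 - a) * (s ^ 2 / 2))
          * (s / (a - 1) - (s / (a - 1)) ^ 3 / 3 + (s / (a - 1)) ^ 5 / 5) :=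
        melnikovJ_le ha₁ ha₂ hs₀.le (arctan_le_sub_add_pow_five_div_five (by positivity))
    _ = s ^ 2 * (-15 * π * (a - 1) ^ 6 - 30 * π * (a - 1) ^ 5 - 100 * (a - 1) ^ 3 * s
          + 40 * (a - 1) ^ 2 * s ^ 3 + 60 * (a - 1) * s ^ 3 + 5 * (a - 1) ^ 3 * s ^ 3
          + 30 * s ^ 5 - 3 * (a - 1) * s ^ 5) / (30 * (a - 1) ^ 5) := by
        field_simp
        ring
    _ < 0 := div_neg_of_neg_of_pos (mul_neg_of_pos_of_neg (by positivity)
        (melnikov_poly_neg_of_le hb hs₀ hs pi_gt_d2)) (by positivity)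

lemma melnikovJ_neg_of_sub_one_lt {a s : ℝ} (ha₁ : 1 < a) (ha₂ : a ≤ 11) (hs : a - 1 < s)
    (hs₃ : s ^ 2 < 3) : melnikovJ a s < 0 := by
  have hb : 0 < a - 1 := by linarith
  have hs₀ : 0 < s := hb.trans hs
  calc melnikovJ a s
      ≤ 5 * (1 - 3 * a) * s - π * (a + 1) * (s ^ 2 / 2) + s ^ 3 / 2
        + (15 * a ^ 2 - 20 * a + 5 + (11 - a) * (s ^ 2 / 2))
          * (π / 2 - ((s / (a - 1))⁻¹ - (s / (a - 1))⁻¹ ^ 3 / 3)) :=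
        melnikovJ_le ha₁ ha₂ hs₀.le (arctan_le_pi_div_two_sub (by positivity))
    _ = (s ^ 2 * (3 * s ^ 4 + 9 * π * s ^ 3 - 9 / 2 * π * (a - 1) * s ^ 3
          - 120 * (a - 1) * s ^ 2 - 60 * s ^ 2 + 3 * (a - 1) ^ 2 * s ^ 2
          + 45 * π * (a - 1) ^ 2 * s + 30 * π * (a - 1) * s - 50 * (a - 1) ^ 3
          - 40 * (a - 1) ^ 2 - (a - 1) ^ 4)
          + (30 * (a - 1) ^ 3 + 20 * (a - 1) ^ 2) * ((a - 1) ^ 2 - s ^ 2)) / (6 * s ^ 3) := by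
        field_simp
        ring
    _ < 0 := by
      have hsq : (a - 1) ^ 2 - s ^ 2 ≤ 0 := by nlinarith
      exact div_neg_of_neg_of_pos (add_neg_of_neg_of_nonpos
        (mul_neg_of_pos_of_neg (by positivity) (melnikov_poly_neg_of_lt hb hs hs₃ pi_lt_d4))
        (mul_nonpos_of_nonneg_of_nonpos (by positivity) hsq)) (by positivity)

/-- For `1 < a < 2` and `0 < h < 3/2`,
`J(h,a) = 5√2(1-3a)√h - π(a+1)h + (a+1)h·arctan(√(2h)/(a+1))
  + (15a²-20a+5+(11-a)h)·arctan(√(2h)/(a-1)) < 0`. -/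
theorem melnikov_J_neg (a h : ℝ) (ha1 : 1 < a) (ha2 : a < 2)
    (hh1 : 0 < h) (hh2 : h < 3 / 2) :
    5 * Real.sqrt 2 * (1 - 3 * a) * Real.sqrt h - Real.pi * (a + 1) * h
      + (a + 1) * h * Real.arctan (Real.sqrt (2 * h) / (a + 1))
      + (15 * a ^ 2 - 20 * a + 5 + (11 - a) * h)
        * Real.arctan (Real.sqrt (2 * h) / (a - 1)) < 0 := by
  rw [melnikovJ_sqrt_two_mul hh1.le]
  rcases le_or_gt √(2 * h) (a - 1) with hs | hs
  · exact melnikovJ_neg_of_le_sub_one ha1 (by linarith) (sqrt_pos.2 (by positivity)) hs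
  · exact melnikovJ_neg_of_sub_one_lt ha1 (by linarith) hs
      (by rw [sq_sqrt (by positivity)]; linarith)
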